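/- If the symmetry group G^axis = {±I_2, ±Y} with Y = [[−1,0],[0,1]] is a symmetry group with respect to a 2×2 integer dilation matrix M (i.e., MEM^{−1} ∈ G^axis for all E ∈ G^axis), then M is either diagonal, M = [[γ_1,0],[0,γ_2]], or antidiagonal, M = [[0,γ_1],[γ_2,0]], for some integers γ_1, γ_2. -/

import Mathlib

/-! Conjugating `Y = diag(-1, 1)` by `M` lands in `{±I, ±Y}`. The cases `MY = ±M` force a zero
column of `M`, so `0` would be an eigenvalue; `MY = YM` forces `M` diagonal and `MY = -YM`
antidiagonal. -/

open Matrix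

/-- A dilation matrix: an integer matrix all of whose (complex) eigenvalues
exceed `1` in modulus. -/
def IsDilation {d : ℕ} (M : Matrix (Fin d) (Fin d) ℤ) : Prop :=
  ∀ μ : ℂ, (Matrix.charpoly (M.map (Int.cast : ℤ → ℂ))).IsRoot μ → 1 < ‖μ‖

theorem IsDilation.det_ne_zero {d : ℕ} {M : Matrix (Fin d) (Fin d) ℤ} (hM : IsDilation M) :
    M.det ≠ 0 := by
  intro h
  refine absurd (hM 0 ?_) (by simp)
  have hdet : (M.map (Int.cast : ℤ → ℂ)).det = 0 := by
    change ((Int.castRingHom ℂ).mapMatrix M).det = 0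
    rw [← RingHom.map_det, h, map_zero]
  rw [Polynomial.IsRoot, eval_charpoly, map_zero, zero_sub, det_neg, hdet, mul_zero]

section AxisReflection

open CharZero

variable {R : Type*} [CommRing R] [NoZeroDivisors R] [CharZero R] {a b c d : R}

theorem det_eq_zero_of_mul_axisReflection_eq_self
    (h : !![a, b; c, d] * !![-1, 0; 0, 1] = !![a, b; c, d]) : !![a, b; c, d].det = 0 := by
  obtain ⟨rfl, rfl⟩ : a = 0 ∧ c = 0 := by simpa [mul_fin_two] using h
  simp

theorem det_eq_zero_of_mul_axisReflection_eq_neg_self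
    (h : !![a, b; c, d] * !![-1, 0; 0, 1] = -!![a, b; c, d]) : !![a, b; c, d].det = 0 := by
  obtain ⟨rfl, rfl⟩ : b = 0 ∧ d = 0 := by simpa [mul_fin_two] using h
  simp

theorem offDiag_eq_zero_of_commute_axisReflection
    (h : !![a, b; c, d] * !![-1, 0; 0, 1] = !![-1, 0; 0, 1] * !![a, b; c, d]) :
    b = 0 ∧ c = 0 := by
  simpa [mul_fin_two] using h

theorem diag_eq_zero_of_anticommute_axisReflection
    (h : !![a, b; c, d] * !![-1, 0; 0, 1] = -!![-1, 0; 0, 1] * !![a, b; c, d]) :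
    a = 0 ∧ d = 0 := by
  simpa [mul_fin_two] using h

end AxisReflection

/-- If the axial symmetry group `G^axis = {±I₂, ±Y}` is a symmetry group with respect
to a 2×2 integer dilation matrix `M` (i.e. `MEM⁻¹ ∈ G^axis` for all `E`), then `M`
is diagonal or antidiagonal. -/
theorem stmt15 (M : Matrix (Fin 2) (Fin 2) ℤ) (hM : IsDilation M)
    (G : Set (Matrix (Fin 2) (Fin 2) ℤ))
    (hG : G = {1, -1, !![(-1 : ℤ), 0; 0, 1], -!![(-1 : ℤ), 0; 0, 1]})
    (hsym : ∀ E ∈ G, ∃ E' ∈ G, M * E = E' * M) :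
    (∃ γ1 γ2 : ℤ, M = !![γ1, 0; 0, γ2]) ∨ (∃ γ1 γ2 : ℤ, M = !![0, γ1; γ2, 0]) := by
  obtain ⟨E, hE, hME⟩ := hsym !![-1, 0; 0, 1] (by simp [hG])
  obtain ⟨a, b, c, d, rfl⟩ : ∃ a b c d : ℤ, M = !![a, b; c, d] := ⟨_, _, _, _, eta_fin_two M⟩
  rw [hG] at hE
  rcases hE with rfl | rfl | rfl | rfl
  · exact absurd (det_eq_zero_of_mul_axisReflection_eq_self (by simpa using hME)) hM.det_ne_zero
  · exact absurd (det_eq_zero_of_mul_axisReflection_eq_neg_self (by simpa using hME))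
      hM.det_ne_zero
  · obtain ⟨rfl, rfl⟩ := offDiag_eq_zero_of_commute_axisReflection hME
    exact .inl ⟨a, d, rfl⟩
  · obtain ⟨rfl, rfl⟩ := diag_eq_zero_of_anticommute_axisReflection hME
    exact .inr ⟨b, c, rfl⟩
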